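/- Let G be a tournament and x a vertex of G that is not contained in any directed triangle. Let H_in = G[N⁻(x)] and H_out = G[N⁺(x)]. Then a set S ⊆ V(G) is a feedback vertex set of G if and only if S ∩ V(H_in) is an FVS of H_in and S ∩ V(H_out) is an FVS of H_out. -/

import Mathlib

open Finset

variable {V : Type*}

/-- A digraph (given by its arc relation) is acyclic if no vertex lies on a directed cycle. -/
def Acyclic (E : V → V → Prop) : Prop := ∀ v, ¬ Relation.TransGen E v v

/-- The digraph obtained by deleting the vertex set `X`. -/
def Delete [DecidableEq V] (E : V → V → Prop) (X : Finset V) : V → V → Prop :=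
  fun a b => a ∉ X ∧ b ∉ X ∧ E a b

/-- The subgraph induced on the vertex set `A`. -/
def Induce [DecidableEq V] (E : V → V → Prop) (A : Finset V) : V → V → Prop :=
  fun a b => a ∈ A ∧ b ∈ A ∧ E a b

/-- `S` is a feedback vertex set of the digraph `E`. -/
def IsFVS [DecidableEq V] (E : V → V → Prop) (S : Finset V) : Prop :=
  Acyclic (Delete E S)

/-- A tournament: no self-loops and exactly one arc between any two distinct vertices. -/
def IsTournament (E : V → V → Prop) : Prop :=
  (∀ v, ¬ E v v) ∧ ∀ u v, u ≠ v → (E u v ↔ ¬ E v u)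

/-- Weight of a vertex set. -/
def weight (w : V → ℕ) (S : Finset V) : ℕ := ∑ v ∈ S, w v

/-- Out-neighborhood. -/
def Nout [Fintype V] [DecidableEq V] (E : V → V → Prop) [DecidableRel E] (p : V) : Finset V :=
  Finset.univ.filter (fun u => E p u)

/-- In-neighborhood. -/
def Nin [Fintype V] [DecidableEq V] (E : V → V → Prop) [DecidableRel E] (p : V) : Finset V :=
  Finset.univ.filter (fun u => E u p)

/-- `S` is a minimum-weight FVS of `(E, w)`. -/
def IsOptFVS [DecidableEq V] (E : V → V → Prop) (w : V → ℕ) (S : Finset V) : Prop :=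
  IsFVS E S ∧ ∀ S', IsFVS E S' → weight w S ≤ weight w S'

/-- `S` is a `p`-disjoint FVS of `E`. -/
def IsPDisjFVS [DecidableEq V] (E : V → V → Prop) (p : V) (S : Finset V) : Prop :=
  IsFVS E S ∧ p ∉ S

/-- `S` is a minimum-weight `p`-disjoint FVS of `(E, w)`. -/
def IsOptPDisjFVS [DecidableEq V] (E : V → V → Prop) (w : V → ℕ) (p : V) (S : Finset V) : Prop :=
  IsPDisjFVS E p S ∧ ∀ S', IsPDisjFVS E p S' → weight w S ≤ weight w S'

/-- `S` is a 2-approximate solution of `(E, w)`. -/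
def TwoApproxFVS [DecidableEq V] (E : V → V → Prop) (w : V → ℕ) (S : Finset V) : Prop :=
  IsFVS E S ∧ ∀ S', IsOptFVS E w S' → weight w S ≤ 2 * weight w S'

/-- `S` is a 2-approximate `p`-disjoint solution of `(E, w)`. -/
def TwoApproxPDisj [DecidableEq V] (E : V → V → Prop) (w : V → ℕ) (p : V) (S : Finset V) : Prop :=
  IsPDisjFVS E p S ∧ ∀ S', IsOptPDisjFVS E w p S' → weight w S ≤ 2 * weight w S'

/-- `l` is a topological sort of the subgraph of `E` induced on the vertex set `A`. -/
def IsTopoOn [DecidableEq V] (E : V → V → Prop) (A : Finset V) (l : List V) : Prop :=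
  l.Nodup ∧ (∀ v, v ∈ l ↔ v ∈ A) ∧
    ∀ (i j : ℕ) (hi : i < l.length) (hj : j < l.length),
      E (l.get ⟨i, hi⟩) (l.get ⟨j, hj⟩) → i < j

/-
If `x` lies in no directed triangle, the tournament is layered: `N⁻(x)`, then `x`, then `N⁺(x)`,
with every arc staying in its layer or moving to a later one (an arc from `N⁺(x)` back to
`N⁻(x)` would close a triangle through `x`). A directed cycle can never return to an earlier
layer, so it lies inside a single layer; the layer `{x}` carries no arcs, so every cycle lies
in `G[N⁻(x)]` or in `G[N⁺(x)]`.
-/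

section Acyclic

variable {R R' : V → V → Prop}

theorem Acyclic.mono (h : ∀ a b, R a b → R' a b) (hR' : Acyclic R') : Acyclic R :=
  fun v hv => hR' v (Relation.TransGen.mono h v v hv)

theorem acyclic_of_forall_not (h : ∀ a b, ¬ R a b) : Acyclic R := fun _ hv => by
  obtain ⟨b, hab, -⟩ := Relation.TransGen.head'_iff.mp hv
  exact h _ _ hab

variable {α : Type*} [PartialOrder α] {f : V → α}

theorem Relation.TransGen.le_of_monotone (hf : ∀ a b, R a b → f a ≤ f b) {u w : V}
    (h : Relation.TransGen R u w) : f u ≤ f w := by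
  induction h with
  | single hab => exact hf _ _ hab
  | tail _ hbc ih => exact ih.trans (hf _ _ hbc)

theorem Relation.TransGen.level_of_monotone (hf : ∀ a b, R a b → f a ≤ f b) {u w : V}
    (h : Relation.TransGen R u w) (hwu : f w ≤ f u) :
    Relation.TransGen (fun a b => f a = f u ∧ f b = f u ∧ R a b) u w := by
  induction h with
  | single hab => exact .single ⟨rfl, le_antisymm hwu (hf _ _ hab), hab⟩
  | @tail b c hub hbc ih =>
    have hbu : f b = f u := le_antisymm ((hf _ _ hbc).trans hwu) (hub.le_of_monotone hf)
    have hcu : f c = f u := le_antisymm hwu (hbu ▸ hf _ _ hbc)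
    exact (ih ((hf _ _ hbc).trans hwu)).tail ⟨hbu, hcu, hbc⟩

theorem Acyclic.of_levels (hf : ∀ a b, R a b → f a ≤ f b)
    (h : ∀ c, Acyclic (fun a b => f a = c ∧ f b = c ∧ R a b)) : Acyclic R :=
  fun v hv => h (f v) v (hv.level_of_monotone hf le_rfl)

end Acyclic

section FVS

variable [DecidableEq V] {E : V → V → Prop} {A S : Finset V} {a b : V}

theorem delete_induce_inter_iff :
    Delete (Induce E A) (S ∩ A) a b ↔ a ∈ A ∧ b ∈ A ∧ Delete E S a b := by
  simp only [Delete, Induce, mem_inter]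
  tauto

theorem IsFVS.induce_inter (hS : IsFVS E S) : IsFVS (Induce E A) (S ∩ A) :=
  Acyclic.mono (fun _ _ h => (delete_induce_inter_iff.mp h).2.2) hS

end FVS

section Tournament

variable [DecidableEq V] (E : V → V → Prop) [DecidableRel E] (x : V)

def layer (v : V) : Fin 3 := if E v x then 0 else if v = x then 1 else 2

variable {E x}

theorem layer_eq_zero_iff {v : V} : layer E x v = 0 ↔ E v x := by
  unfold layer
  split_ifs <;> simp_all

theorem eq_of_layer_eq_one {v : V} (h : layer E x v = 1) : v = x := by
  unfold layer at h
  split_ifs at h <;> simp_all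

theorem IsTournament.arc_of_layer_eq_two (hT : IsTournament E) {v : V} (h : layer E x v = 2) :
    E x v := by
  unfold layer at h
  split_ifs at h with hvx hv
  · exact absurd h (by decide)
  · exact absurd h (by decide)
  · exact (hT.2 x v (Ne.symm hv)).mpr hvx

theorem IsTournament.layer_le_of_arc (hT : IsTournament E) (hx : ¬ ∃ a b, E x a ∧ E a b ∧ E b x)
    {a b : V} (hab : E a b) : layer E x a ≤ layer E x b := by
  have hb : ¬ E a x → ¬ E b x ∧ b ≠ x := fun hax => by
    refine ⟨fun hbx => ?_, fun hbx => hax (hbx ▸ hab)⟩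
    by_cases ha : a = x
    · subst ha
      exact (hT.2 a b fun h => hT.1 a (h ▸ hab)).mp hab hbx
    · exact hx ⟨a, b, (hT.2 x a (Ne.symm ha)).mpr hax, hab, hbx⟩
  unfold layer
  split_ifs <;> simp_all

end Tournament

theorem stmt3 [Fintype V] [DecidableEq V] (E : V → V → Prop) [DecidableRel E]
    (hT : IsTournament E) (x : V)
    (hx : ¬ ∃ a b, E x a ∧ E a b ∧ E b x) (S : Finset V) :
    IsFVS E S ↔
      IsFVS (Induce E (Nin E x)) (S ∩ Nin E x) ∧
        IsFVS (Induce E (Nout E x)) (S ∩ Nout E x) := by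
  refine ⟨fun hS => ⟨hS.induce_inter, hS.induce_inter⟩, fun ⟨hIn, hOut⟩ => ?_⟩
  refine Acyclic.of_levels (f := layer E x) (fun a b h => hT.layer_le_of_arc hx h.2.2) fun c => ?_
  obtain rfl | rfl | rfl : c = 0 ∨ c = 1 ∨ c = 2 := by omega
  · refine hIn.mono fun a b ⟨ha, hb, hab⟩ => delete_induce_inter_iff.mpr ⟨?_, ?_, hab⟩
    exacts [mem_filter.mpr ⟨mem_univ a, layer_eq_zero_iff.mp ha⟩,
      mem_filter.mpr ⟨mem_univ b, layer_eq_zero_iff.mp hb⟩]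
  · refine acyclic_of_forall_not fun a b ⟨ha, hb, hab⟩ => ?_
    obtain rfl := eq_of_layer_eq_one ha
    obtain rfl := eq_of_layer_eq_one hb
    exact hT.1 _ hab.2.2
  · refine hOut.mono fun a b ⟨ha, hb, hab⟩ => delete_induce_inter_iff.mpr ⟨?_, ?_, hab⟩
    exacts [mem_filter.mpr ⟨mem_univ a, hT.arc_of_layer_eq_two ha⟩,
      mem_filter.mpr ⟨mem_univ b, hT.arc_of_layer_eq_two hb⟩]
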